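/- arXiv:2003.01154 — 4 statements merged into one kernel-verified Lean document; each statement's English description precedes it below -/
import Mathlib

section
/- Let G=(V,E) be a finite simple graph on n vertices, q ≥ 2 an integer, P_1,…,P_ℓ a partition of V with |P_i| ≥ ηn for all i (η > 0), and α > 0 such that for every i and every S ⊆ P_i with |S| ≤ |P_i|/2 one has |∂_{G[P_i]}(S)| ≥ α|S|. Let ψ be a ground state, let U ⊆ V be sparse but not small, and let ω : V → {1,…,q} satisfy ω(v) ≠ ψ(v) for all v ∈ U and ω(v) = ψ(v) for all v ∉ U. Then the number of edges of G that are monochromatic under ψ but bichromatic under ω is strictly greater than αηn/2. -/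
open Classical

noncomputable section

namespace Paper

variable {V : Type*}

/-- The degree of a vertex. -/
def deg (G : SimpleGraph V) (v : V) : ℕ := (G.neighborSet v).ncard

/-- The volume of a vertex set: the sum of the degrees of its vertices. -/
def vol (G : SimpleGraph V) (S : Set V) : ℕ := ∑ᶠ v ∈ S, deg G v

/-- The edge boundary ∂(S): edges of `G` with exactly one endpoint in `S`. -/
def bdry (G : SimpleGraph V) (S : Set V) : Set (Sym2 V) :=
  {e | e ∈ G.edgeSet ∧ (∃ u ∈ e, u ∈ S) ∧ (∃ v ∈ e, v ∉ S)}

/-- The closure ∇(S): edges of `G` with at least one endpoint in `S`. -/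
def cl (G : SimpleGraph V) (S : Set V) : Set (Sym2 V) :=
  {e | e ∈ G.edgeSet ∧ ∃ u ∈ e, u ∈ S}

/-- The conductance φ_G(S) = |∂(S)| / vol_G(S). -/
def cond (G : SimpleGraph V) (S : Set V) : ℝ :=
  ((bdry G S).ncard : ℝ) / (vol G S : ℝ)

/-- The conductance φ(G) of the graph: the minimum of φ_G(S) over nonempty S
with vol_G(S) ≤ vol_G(V)/2. -/
def graphCond [Fintype V] (G : SimpleGraph V) : ℝ :=
  sInf {x : ℝ | ∃ S : Set V, S.Nonempty ∧ 2 * vol G S ≤ vol G Set.univ ∧ x = cond G S}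

/-- The induced subgraph G[P], realised as a graph on the same vertex set
(vertices outside `P` are isolated). -/
def restrict (G : SimpleGraph V) (P : Set V) : SimpleGraph V where
  Adj u v := G.Adj u v ∧ u ∈ P ∧ v ∈ P
  symm := ⟨fun _ _ h => ⟨h.1.symm, h.2.2, h.2.1⟩⟩
  loopless := ⟨fun u h => G.loopless.irrefl u h.1⟩

/-- e(S,T): the number of edges of `G` with one endpoint in `S` and the other in `T \ S`. -/
def eCount (G : SimpleGraph V) (S T : Set V) : ℕ :=
  ({e | e ∈ G.edgeSet ∧ ∃ u v, e = s(u, v) ∧ u ∈ S ∧ v ∈ T \ S}).ncard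

/-- φ(S,B) = e(S,B) / ((vol(B∖S)/vol(B)) · e(S, V∖B)). -/
def condPair (G : SimpleGraph V) (S B : Set V) : ℝ :=
  (eCount G S B : ℝ) /
    (((vol G (B \ S) : ℝ) / (vol G B : ℝ)) * (eCount G S (Set.univ \ B) : ℝ))

/-- An edge is monochromatic under a colouring if all its endpoints get the same colour. -/
def Mono {q : ℕ} (χ : V → Fin q) (e : Sym2 V) : Prop :=
  ∀ u ∈ e, ∀ v ∈ e, χ u = χ v

/-- The number of edges in `F` that are monochromatic under `χ`. -/
def monoCount {q : ℕ} (χ : V → Fin q) (F : Set (Sym2 V)) : ℕ :=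
  {e ∈ F | Mono χ e}.ncard

/-- m_G(χ): the number of monochromatic edges of `G` under `χ`. -/
def mG {q : ℕ} (G : SimpleGraph V) (χ : V → Fin q) : ℕ := monoCount χ G.edgeSet

/-- The q-colour Potts model partition function. -/
def Z [Fintype V] [DecidableEq V] (G : SimpleGraph V) (q : ℕ) (β : ℝ) : ℝ :=
  ∑ ω : V → Fin q, Real.exp (β * (mG G ω : ℝ))

/-- P_1, …, P_ℓ form a partition of the vertex set. -/
def IsPartition {ℓ : ℕ} (P : Fin ℓ → Set V) : Prop :=
  (∀ i j : Fin ℓ, i ≠ j → Disjoint (P i) (P j)) ∧ (⋃ i, P i) = Set.univ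

/-- A set is small (w.r.t. the partition P) if |S ∩ P i| ≤ |P i|/2 for all i. -/
def Small {ℓ : ℕ} (P : Fin ℓ → Set V) (S : Set V) : Prop :=
  ∀ i, ((S ∩ P i).ncard : ℝ) ≤ ((P i).ncard : ℝ) / 2

/-- A set U is sparse if the vertex set of every connected component of G[U] is small. -/
def Sparse {ℓ : ℕ} (G : SimpleGraph V) (P : Fin ℓ → Set V) (U : Set V) : Prop :=
  ∀ u ∈ U, Small P {v | (restrict G U).Reachable u v}

/-- Every `S ⊆ P i` with `|S| ≤ |P i|/2` satisfies `|∂_{G[P i]}(S)| ≥ α |S|`. -/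
def PartExpansion {ℓ : ℕ} (G : SimpleGraph V) (P : Fin ℓ → Set V) (α : ℝ) : Prop :=
  ∀ i, ∀ S ⊆ P i, (S.ncard : ℝ) ≤ ((P i).ncard : ℝ) / 2 →
    α * (S.ncard : ℝ) ≤ ((bdry (restrict G (P i)) S).ncard : ℝ)

/-- A ground state: a colouring constant on each part of the partition. -/
def GroundState {q ℓ : ℕ} (P : Fin ℓ → Set V) (ψ : V → Fin q) : Prop :=
  ∀ i : Fin ℓ, ∀ u ∈ P i, ∀ v ∈ P i, ψ u = ψ v

/-- A state ω is close to a ground state ψ if on each part, more than half of the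
vertices agree with ψ. -/
def CloseTo {q ℓ : ℕ} (P : Fin ℓ → Set V) (ω ψ : V → Fin q) : Prop :=
  ∀ i : Fin ℓ, ((P i).ncard : ℝ) / 2 < ((P i ∩ {v | ω v = ψ v}).ncard : ℝ)

/-- Z*: the contribution to Z from states close to some ground state. -/
def Zstar [Fintype V] [DecidableEq V] {ℓ : ℕ} (G : SimpleGraph V) (P : Fin ℓ → Set V)
    (q : ℕ) (β : ℝ) : ℝ :=
  ∑ ω : V → Fin q,
    if ∃ ψ : V → Fin q, GroundState P ψ ∧ CloseTo P ω ψ then Real.exp (β * (mG G ω : ℝ)) else 0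

/-- The colouring of V that colours γ by `lam` and everything else by `ψ`. -/
def combine {q : ℕ} (γ : Set V) (ψ : V → Fin q) (lam : γ → Fin q) : V → Fin q :=
  fun v => if h : v ∈ γ then lam ⟨v, h⟩ else ψ v

/-- m_G(ψ, γ, λ): the number of edges of ∇(γ) that are monochromatic when γ is
coloured by λ and all other vertices by ψ. -/
def mRes {q : ℕ} (G : SimpleGraph V) (γ : Set V) (ψ : V → Fin q) (lam : γ → Fin q) : ℕ :=
  monoCount (combine γ ψ lam) (cl G γ)

/-- A polymer: a nonempty small set inducing a connected subgraph. -/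
def Polymer {ℓ : ℕ} (G : SimpleGraph V) (P : Fin ℓ → Set V) (γ : Set V) : Prop :=
  γ.Nonempty ∧ (G.induce γ).Connected ∧ Small P γ

/-- Two polymers are compatible if they are disjoint with disjoint edge boundaries. -/
def Compatible (G : SimpleGraph V) (γ γ' : Set V) : Prop :=
  Disjoint γ γ' ∧ Disjoint (bdry G γ) (bdry G γ')

/-- The family of vertex sets of connected components of G[U]. -/
def components (G : SimpleGraph V) (U : Set V) : Set (Set V) :=
  {C | ∃ u ∈ U, C = {v | (restrict G U).Reachable u v}}

/-!
Pick a part `P i` in which `U` occupies more than half of the vertices. Every component `C` of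
`G[U]` is small, so expansion of `G[P i]` gives at least `α |C ∩ P i|` edges of `G[P i]` leaving
`C ∩ P i`. Such an edge joins a vertex of `C` to a vertex of `P i` outside `U` (an edge to another
vertex of `U` would stay inside `C`), so it is monochromatic under `ψ` and bichromatic under `ω`,
and it determines `C` by its endpoint in `U`. Summing over the components gives
`α |U ∩ P i| > α |P i| / 2 ≥ α η n / 2` such edges.
-/

open scoped Function

lemma restrict_adj {G : SimpleGraph V} {P : Set V} {u v : V} :
    (restrict G P).Adj u v ↔ G.Adj u v ∧ u ∈ P ∧ v ∈ P := Iff.rfl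

lemma exists_eq_mk_of_mem_bdry {G : SimpleGraph V} {S : Set V} {e : Sym2 V}
    (he : e ∈ bdry G S) : ∃ a b, e = s(a, b) ∧ G.Adj a b ∧ a ∈ S ∧ b ∉ S := by
  induction e using Sym2.ind with
  | _ x y =>
    obtain ⟨hxy, ⟨u, hu, huS⟩, ⟨w, hw, hwS⟩⟩ := he
    rcases Sym2.mem_iff.1 hu with rfl | rfl <;> rcases Sym2.mem_iff.1 hw with rfl | rfl
    · exact absurd huS hwS
    · exact ⟨u, w, rfl, hxy, huS, hwS⟩
    · exact ⟨u, w, Sym2.eq_swap, G.adj_symm hxy, huS, hwS⟩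
    · exact absurd huS hwS

lemma mono_mk_iff {q : ℕ} {χ : V → Fin q} {a b : V} : Mono χ s(a, b) ↔ χ a = χ b := by
  refine ⟨fun h => h a (Sym2.mem_mk_left a b) b (Sym2.mem_mk_right a b), fun h u hu v hv => ?_⟩
  rcases Sym2.mem_iff.1 hu with rfl | rfl <;> rcases Sym2.mem_iff.1 hv with rfl | rfl <;>
    simp [h]

lemma Small.mono [Finite V] {ℓ : ℕ} {P : Fin ℓ → Set V} {S T : Set V} (hT : Small P T)
    (hST : S ⊆ T) : Small P S := fun i =>
  le_trans (by exact_mod_cast Set.ncard_le_ncard (Set.inter_subset_inter_left _ hST)) (hT i)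

lemma mul_ncard_iUnion_le_ncard {ι X Y : Type*} [Finite ι] [Finite X] [Finite Y] {c : ℝ}
    {S : ι → Set X} {B : ι → Set Y} {M : Set Y} (hS : Pairwise (Disjoint on S))
    (hB : Pairwise (Disjoint on B)) (hSB : ∀ i, c * (S i).ncard ≤ (B i).ncard)
    (hBM : ∀ i, B i ⊆ M) : c * (⋃ i, S i).ncard ≤ M.ncard := by
  have := Fintype.ofFinite ι
  calc c * ((⋃ i, S i).ncard : ℝ) = ∑ i, c * (S i).ncard := by
        rw [Set.ncard_iUnion_of_finite (fun _ => Set.toFinite _) hS, finsum_eq_sum_of_fintype,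
          Nat.cast_sum, Finset.mul_sum]
    _ ≤ ∑ i, ((B i).ncard : ℝ) := Finset.sum_le_sum fun i _ => hSB i
    _ = (⋃ i, B i).ncard := by
        rw [Set.ncard_iUnion_of_finite (fun _ => Set.toFinite _) hB, finsum_eq_sum_of_fintype,
          Nat.cast_sum]
    _ ≤ M.ncard := by exact_mod_cast Set.ncard_le_ncard (Set.iUnion_subset hBM)

section Components

variable {G : SimpleGraph V} {U : Set V}

lemma Sparse.small_supp_inter [Finite V] {ℓ : ℕ} {P : Fin ℓ → Set V} (hU : Sparse G P U)
    (c : (restrict G U).ConnectedComponent) : Small P (c.supp ∩ U) := by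
  rcases (c.supp ∩ U).eq_empty_or_nonempty with h | ⟨u, huc, huU⟩
  · intro i
    rw [h, Set.empty_inter, Set.ncard_empty, Nat.cast_zero]
    positivity
  · exact (hU u huU).mono fun v hv => SimpleGraph.ConnectedComponent.exact (huc.trans hv.1.symm)

lemma iUnion_supp_inter (P : Set V) :
    ⋃ c : (restrict G U).ConnectedComponent, c.supp ∩ U ∩ P = U ∩ P := by
  ext v
  simp

lemma pairwise_disjoint_supp_inter (P : Set V) :
    Pairwise (Disjoint on fun c : (restrict G U).ConnectedComponent => c.supp ∩ U ∩ P) :=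
  fun _ _ hcd => Set.disjoint_left.2 fun _ hc hd => hcd (hc.1.1.symm.trans hd.1.1)

lemma exists_eq_mk_of_mem_bdry_supp_inter {P : Set V} {c : (restrict G U).ConnectedComponent}
    {e : Sym2 V} (he : e ∈ bdry (restrict G P) (c.supp ∩ U ∩ P)) :
    ∃ a b, e = s(a, b) ∧ G.Adj a b ∧ a ∈ P ∧ b ∈ P ∧ a ∈ c.supp ∧ a ∈ U ∧ b ∉ U := by
  obtain ⟨a, b, rfl, ⟨hab, haP, hbP⟩, ⟨⟨hac, haU⟩, -⟩, hbS⟩ := exists_eq_mk_of_mem_bdry he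
  refine ⟨a, b, rfl, hab, haP, hbP, hac, haU, fun hbU => hbS ⟨⟨?_, hbU⟩, hbP⟩⟩
  exact (c.mem_supp_congr_adj (restrict_adj.2 ⟨hab, haU, hbU⟩)).1 hac

lemma pairwise_disjoint_bdry_supp_inter (P : Set V) :
    Pairwise (Disjoint on fun c : (restrict G U).ConnectedComponent =>
      bdry (restrict G P) (c.supp ∩ U ∩ P)) := by
  intro c d hcd
  refine Set.disjoint_left.2 fun e hc hd => ?_
  obtain ⟨a, b, rfl, -, -, -, hac, haU, hbU⟩ := exists_eq_mk_of_mem_bdry_supp_inter hc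
  obtain ⟨a', b', he, -, -, -, had, haU', -⟩ := exists_eq_mk_of_mem_bdry_supp_inter hd
  rcases Sym2.eq_iff.1 he with ⟨rfl, -⟩ | ⟨-, rfl⟩
  · exact hcd (hac.symm.trans had)
  · exact hbU haU'

end Components

section Colourings

variable {ℓ q : ℕ} {P : Fin ℓ → Set V} {U : Set V} {ψ ω : V → Fin q}

lemma GroundState.mono_and_not_mono_of_mem_of_not_mem (hψ : GroundState P ψ)
    (hωU : ∀ v ∈ U, ω v ≠ ψ v) (hωout : ∀ v ∉ U, ω v = ψ v) {i : Fin ℓ} {a b : V}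
    (ha : a ∈ P i) (hb : b ∈ P i) (haU : a ∈ U) (hbU : b ∉ U) :
    Mono ψ s(a, b) ∧ ¬ Mono ω s(a, b) := by
  rw [mono_mk_iff, mono_mk_iff, hωout b hbU, ← hψ i a ha b hb]
  exact ⟨rfl, hωU a haU⟩

theorem PartExpansion.mul_ncard_inter_le [Finite V] {G : SimpleGraph V} {α : ℝ}
    (hexp : PartExpansion G P α) (hU : Sparse G P U) (hψ : GroundState P ψ)
    (hωU : ∀ v ∈ U, ω v ≠ ψ v) (hωout : ∀ v ∉ U, ω v = ψ v) (i : Fin ℓ) :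
    α * (U ∩ P i).ncard ≤ ({e ∈ G.edgeSet | Mono ψ e ∧ ¬ Mono ω e}).ncard := by
  rw [← iUnion_supp_inter]
  refine mul_ncard_iUnion_le_ncard (pairwise_disjoint_supp_inter _)
    (pairwise_disjoint_bdry_supp_inter _)
    (fun c => hexp i _ Set.inter_subset_right (hU.small_supp_inter c i)) fun c e he => ?_
  obtain ⟨a, b, rfl, hab, haP, hbP, -, haU, hbU⟩ := exists_eq_mk_of_mem_bdry_supp_inter he
  exact ⟨hab, hψ.mono_and_not_mono_of_mem_of_not_mem hωU hωout haP hbP haU hbU⟩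

end Colourings

theorem statement7_general [Fintype V] (G : SimpleGraph V) {ℓ : ℕ} (P : Fin ℓ → Set V)
    (q : ℕ)
    (η : ℝ) (hsize : ∀ i, η * (Fintype.card V : ℝ) ≤ ((P i).ncard : ℝ))
    (α : ℝ) (hα : 0 < α) (hexp : PartExpansion G P α)
    (ψ : V → Fin q) (hψ : GroundState P ψ)
    (U : Set V) (hUsparse : Sparse G P U) (hUnotsmall : ¬ Small P U)
    (ω : V → Fin q) (hωU : ∀ v ∈ U, ω v ≠ ψ v) (hωout : ∀ v ∉ U, ω v = ψ v) :
    α * η * (Fintype.card V : ℝ) / 2 <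
      (({e ∈ G.edgeSet | Mono ψ e ∧ ¬ Mono ω e}).ncard : ℝ) := by
  obtain ⟨i, hi⟩ : ∃ i, ((P i).ncard : ℝ) / 2 < (U ∩ P i).ncard := by
    simpa [Small] using hUnotsmall
  calc α * η * (Fintype.card V : ℝ) / 2 ≤ α * ((P i).ncard / 2) := by
        nlinarith [mul_le_mul_of_nonneg_left (hsize i) hα.le]
    _ < α * (U ∩ P i).ncard := mul_lt_mul_of_pos_left hi hα
    _ ≤ _ := hexp.mul_ncard_inter_le hUsparse hψ hωU hωout i

/-- if U is sparse but not small, and ω differs from the ground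
state ψ exactly on U, then strictly more than αηn/2 edges that are
monochromatic under ψ are bichromatic under ω. -/
theorem statement7 [Fintype V] (G : SimpleGraph V) {ℓ : ℕ} (P : Fin ℓ → Set V)
    (hP : IsPartition P) (q : ℕ) (hq : 2 ≤ q)
    (η : ℝ) (hη : 0 < η) (hsize : ∀ i, η * (Fintype.card V : ℝ) ≤ ((P i).ncard : ℝ))
    (α : ℝ) (hα : 0 < α) (hexp : PartExpansion G P α)
    (ψ : V → Fin q) (hψ : GroundState P ψ)
    (U : Set V) (hUsparse : Sparse G P U) (hUnotsmall : ¬ Small P U)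
    (ω : V → Fin q) (hωU : ∀ v ∈ U, ω v ≠ ψ v) (hωout : ∀ v ∉ U, ω v = ψ v) :
    α * η * (Fintype.card V : ℝ) / 2 <
      (({e ∈ G.edgeSet | Mono ψ e ∧ ¬ Mono ω e}).ncard : ℝ) :=
  statement7_general G P q η hsize α hα hexp ψ hψ U hUsparse hUnotsmall ω hωU hωout

end Paper

end
end

section
/- Let G=(V,E) be a finite simple graph, q ≥ 2 an integer, P_1,…,P_ℓ a partition of V, and α > 0 such that for every i and every S ⊆ P_i with |S| ≤ |P_i|/2 one has |∂_{G[P_i]}(S)| ≥ α|S|. Let ψ be a ground state and let γ ⊆ V be a nonempty small set. Then for every λ ∈ Λ(γ,ψ): m_G(ψ,γ,λ) ≤ |∇(γ)| − α|γ|. Consequently, for every β ≥ 0, e^{−β|∇(γ)|} · Σ_{λ∈Λ(γ,ψ)} e^{β·m_G(ψ,γ,λ)} ≤ (q−1)^{|γ|} · e^{−βα|γ|}. -/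
open Classical

noncomputable section

namespace Paper

variable {V : Type*}

/-!
An edge of `∂_{G[P_i]}(γ ∩ P_i)` joins a vertex `u ∈ γ`, coloured `λ u ≠ ψ_i`, to a vertex of
`P_i \ γ`, coloured `ψ_i`; so it is a non-monochromatic edge of `∇(γ)`. These boundaries are
disjoint for distinct `i`, and by expansion of the parts (`γ` being small) they contain at
least `α |γ|` edges in total. The bound on the sum follows since there are `(q - 1)^|γ|`
admissible `λ`, each contributing at most `e^{β(|∇(γ)| - α|γ|)}`.
-/

section

lemma mem_of_mem_edgeSet_restrict {G : SimpleGraph V} {P : Set V} {e : Sym2 V}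
    (he : e ∈ (restrict G P).edgeSet) {x : V} (hx : x ∈ e) : x ∈ P := by
  induction e using Sym2.ind with
  | _ a b =>
    rcases Sym2.mem_iff.mp hx with rfl | rfl
    exacts [he.2.1, he.2.2]

lemma disjoint_bdry_restrict (G : SimpleGraph V) {A B : Set V} (hAB : Disjoint A B)
    (S T : Set V) : Disjoint (bdry (restrict G A) S) (bdry (restrict G B) T) :=
  Set.disjoint_left.mpr fun _ ⟨he, ⟨_, hu, _⟩, _⟩ ⟨he', _⟩ =>
    Set.disjoint_left.mp hAB (mem_of_mem_edgeSet_restrict he hu)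
      (mem_of_mem_edgeSet_restrict he' hu)

lemma ncard_eq_sum_ncard_inter_of_isPartition [Finite V] {ℓ : ℕ} {P : Fin ℓ → Set V}
    (hP : IsPartition P) (S : Set V) : S.ncard = ∑ i, (S ∩ P i).ncard := by
  rw [← finsum_eq_sum_of_fintype, ← Set.ncard_iUnion_of_finite (fun _ => Set.toFinite _),
    ← Set.inter_iUnion, hP.2, Set.inter_univ]
  exact fun i j hij => (hP.1 i j hij).mono Set.inter_subset_right Set.inter_subset_right

lemma monoCount_add_ncard_not_mono {q : ℕ} (χ : V → Fin q) {F : Set (Sym2 V)}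
    (hF : F.Finite) : monoCount χ F + {e ∈ F | ¬ Mono χ e}.ncard = F.ncard :=
  Set.ncard_inter_add_ncard_sdiff_eq_ncard F {e | Mono χ e} hF

variable {q ℓ : ℕ} {G : SimpleGraph V} {P : Fin ℓ → Set V} {ψ : V → Fin q} {γ : Set V}
  {lam : γ → Fin q}

lemma bdry_restrict_subset_not_mono (hψ : GroundState P ψ) (hlam : ∀ v : γ, lam v ≠ ψ v)
    (i : Fin ℓ) :
    bdry (restrict G (P i)) (γ ∩ P i) ⊆ {e ∈ cl G γ | ¬ Mono (combine γ ψ lam) e} := by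
  rintro e ⟨he, ⟨u, hue, huγ, huP⟩, w, hwe, hw⟩
  have hwP : w ∈ P i := mem_of_mem_edgeSet_restrict he hwe
  have hwγ : w ∉ γ := fun h => hw ⟨h, hwP⟩
  have hsub : restrict G (P i) ≤ G := fun _ _ h => h.1
  refine ⟨⟨SimpleGraph.edgeSet_mono hsub he, u, hue, huγ⟩, fun hmono => hlam ⟨u, huγ⟩ ?_⟩
  have huw := hmono u hue w hwe
  simp only [combine, dif_pos huγ, dif_neg hwγ] at huw
  rw [huw, hψ i w hwP u huP]

lemma mul_ncard_le_ncard_not_mono [Finite V] {α : ℝ} (hP : IsPartition P)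
    (hexp : PartExpansion G P α) (hψ : GroundState P ψ) (hγ : Small P γ)
    (hlam : ∀ v : γ, lam v ≠ ψ v) :
    α * γ.ncard ≤ ({e ∈ cl G γ | ¬ Mono (combine γ ψ lam) e}.ncard : ℝ) := by
  let B i := bdry (restrict G (P i)) (γ ∩ P i)
  calc α * (γ.ncard : ℝ) = ∑ i, α * ((γ ∩ P i).ncard : ℝ) := by
        rw [ncard_eq_sum_ncard_inter_of_isPartition hP γ, Nat.cast_sum, Finset.mul_sum]
    _ ≤ ∑ i, ((B i).ncard : ℝ) :=
        Finset.sum_le_sum fun i _ => hexp i _ Set.inter_subset_right (hγ i)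
    _ = ((⋃ i, B i).ncard : ℝ) := by
        rw [Set.ncard_iUnion_of_finite (fun _ => Set.toFinite _)
          (fun i j hij => disjoint_bdry_restrict G (hP.1 i j hij) _ _),
          finsum_eq_sum_of_fintype, Nat.cast_sum]
    _ ≤ _ := by
        exact_mod_cast Set.ncard_le_ncard
          (Set.iUnion_subset (bdry_restrict_subset_not_mono hψ hlam))

theorem mRes_le_ncard_cl_sub [Finite V] {α : ℝ} (hP : IsPartition P)
    (hexp : PartExpansion G P α) (hψ : GroundState P ψ) (hγ : Small P γ)
    (hlam : ∀ v : γ, lam v ≠ ψ v) :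
    (mRes G γ ψ lam : ℝ) ≤ (cl G γ).ncard - α * γ.ncard := by
  have hsplit := monoCount_add_ncard_not_mono (combine γ ψ lam) (Set.toFinite (cl G γ))
  have hexpand := mul_ncard_le_ncard_not_mono hP hexp hψ hγ hlam
  rw [mRes, ← hsplit, Nat.cast_add]
  linarith

end

lemma card_filter_forall_ne {ι : Type*} [Fintype ι] [DecidableEq ι] {q : ℕ} (a : ι → Fin q) :
    ((Finset.univ.filter fun f : ι → Fin q => ∀ i, f i ≠ a i).card : ℝ) =
      ((q : ℝ) - 1) ^ Fintype.card ι := by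
  have hfilter : (Finset.univ.filter fun f : ι → Fin q => ∀ i, f i ≠ a i) =
      Fintype.piFinset fun i => Finset.univ.erase (a i) := by
    ext f
    simp [Fintype.mem_piFinset]
  have hcard (i : ι) : ((Finset.univ.erase (a i)).card : ℝ) = (q : ℝ) - 1 := by
    -- `a i : Fin q` gives `1 ≤ q`, so the subtraction `q - 1` in `ℕ` does not truncate.
    rw [Finset.card_erase_of_mem (Finset.mem_univ _), Finset.card_univ, Fintype.card_fin,
      Nat.cast_sub (a i).pos, Nat.cast_one]
  rw [hfilter, Fintype.card_piFinset, Nat.cast_prod, Finset.prod_congr rfl fun i _ => hcard i,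
    Finset.prod_const, Finset.card_univ]

theorem statement8_general [Fintype V] [DecidableEq V] (G : SimpleGraph V) {ℓ : ℕ}
    (P : Fin ℓ → Set V) (hP : IsPartition P) (q : ℕ)
    (α : ℝ) (hexp : PartExpansion G P α)
    (ψ : V → Fin q) (hψ : GroundState P ψ)
    (γ : Set V) (hγsmall : Small P γ) :
    (∀ lam : γ → Fin q, (∀ v : γ, lam v ≠ ψ ↑v) →
      (mRes G γ ψ lam : ℝ) ≤ ((cl G γ).ncard : ℝ) - α * (γ.ncard : ℝ)) ∧
    (∀ β : ℝ, 0 ≤ β →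
      Real.exp (-β * ((cl G γ).ncard : ℝ)) *
          (∑ lam : γ → Fin q,
            if ∀ v : γ, lam v ≠ ψ ↑v then Real.exp (β * (mRes G γ ψ lam : ℝ)) else 0) ≤
        ((q : ℝ) - 1) ^ γ.ncard * Real.exp (-β * α * (γ.ncard : ℝ))) := by
  have hm := fun (lam : γ → Fin q) (hlam : ∀ v : γ, lam v ≠ ψ v) =>
    mRes_le_ncard_cl_sub hP hexp hψ hγsmall hlam
  refine ⟨hm, fun β hβ => ?_⟩
  have hsum : (∑ lam : γ → Fin q,
      if ∀ v : γ, lam v ≠ ψ ↑v then Real.exp (β * (mRes G γ ψ lam : ℝ)) else 0) ≤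
      ((q : ℝ) - 1) ^ γ.ncard * Real.exp (β * ((cl G γ).ncard - α * γ.ncard)) := by
    have hcount := card_filter_forall_ne (fun v : γ => ψ v)
    rw [← Nat.card_eq_fintype_card, Nat.card_coe_set_eq] at hcount
    rw [← Finset.sum_filter, ← hcount, ← nsmul_eq_mul]
    exact Finset.sum_le_card_nsmul _ _ _ fun lam hlam => Real.exp_le_exp.mpr
      (mul_le_mul_of_nonneg_left (hm lam (Finset.mem_filter.mp hlam).2) hβ)
  calc _ ≤ Real.exp (-β * (cl G γ).ncard) *
        (((q : ℝ) - 1) ^ γ.ncard * Real.exp (β * ((cl G γ).ncard - α * γ.ncard))) :=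
        mul_le_mul_of_nonneg_left hsum (Real.exp_pos _).le
    _ = _ := by
        rw [mul_left_comm, ← Real.exp_add]
        ring_nf

/-- the polymer weight bound:
every λ ∈ Λ(γ,ψ) has m_G(ψ,γ,λ) ≤ |∇(γ)| − α|γ|, and consequently
e^{−β|∇(γ)|}·R^ψ(γ,β) ≤ (q−1)^{|γ|}·e^{−βα|γ|}. -/
theorem statement8 [Fintype V] [DecidableEq V] (G : SimpleGraph V) {ℓ : ℕ}
    (P : Fin ℓ → Set V) (hP : IsPartition P) (q : ℕ) (hq : 2 ≤ q)
    (α : ℝ) (hα : 0 < α) (hexp : PartExpansion G P α)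
    (ψ : V → Fin q) (hψ : GroundState P ψ)
    (γ : Set V) (hγne : γ.Nonempty) (hγsmall : Small P γ) :
    (∀ lam : γ → Fin q, (∀ v : γ, lam v ≠ ψ ↑v) →
      (mRes G γ ψ lam : ℝ) ≤ ((cl G γ).ncard : ℝ) - α * (γ.ncard : ℝ)) ∧
    (∀ β : ℝ, 0 ≤ β →
      Real.exp (-β * ((cl G γ).ncard : ℝ)) *
          (∑ lam : γ → Fin q,
            if ∀ v : γ, lam v ≠ ψ ↑v then Real.exp (β * (mRes G γ ψ lam : ℝ)) else 0) ≤
        ((q : ℝ) - 1) ^ γ.ncard * Real.exp (-β * α * (γ.ncard : ℝ))) :=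
  statement8_general G P hP q α hexp ψ hψ γ hγsmall

end Paper

end
end

section
/- Let G=(V,E) be a finite simple graph of maximum degree Δ ≥ 1, let q ≥ 2 be an integer, let α > 0, and let β ≥ (4 + 2·log(qΔ))/α. Then for every vertex v of G: Σ over nonempty U ⊆ V with v ∈ U and G[U] connected of e^{(2 − βα + log(q−1))·|U|} ≤ 1/(Δ+1). -/
/-!
A connected set `U ∋ v` is the vertex set of a closed walk at `v` of length `2 (|U| - 1)`, so there
are at most `Δ ^ (2 (k - 1))` of them with `|U| = k`. The hypothesis on `β` gives
`r := exp (2 - βα + log (q - 1)) ≤ 1 / (4 Δ²)`, hence the sum is at most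
`r ∑ₖ (Δ² r)ᵏ ≤ 2 r ≤ 1 / (Δ + 1)`.
-/

open Classical

noncomputable section

namespace Paper

variable {V : Type*}

theorem deg_eq_degree (G : SimpleGraph V) [G.LocallyFinite] (v : V) : deg G v = G.degree v := by
  rw [deg, ← SimpleGraph.card_neighborSet_eq_degree, Set.ncard_eq_toFinset_card', Set.toFinset_card]

end Paper

open Finset

theorem Finset.sum_pow_le_two {ι : Type*} (s : Finset ι) (g : ι → ℕ) {a r : ℝ} (ha : 0 ≤ a)
    (hr : 0 ≤ r) (har : a * r ≤ 1 / 2) (hcard : ∀ k, (#{i ∈ s | g i = k} : ℝ) ≤ a ^ k) :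
    ∑ i ∈ s, r ^ g i ≤ 2 := by
  have har1 : a * r < 1 := by linarith
  calc ∑ i ∈ s, r ^ g i = ∑ k ∈ s.image g, (#{i ∈ s | g i = k} : ℝ) * r ^ k := by
        rw [sum_comp (fun k => r ^ k) g]; simp only [nsmul_eq_mul]
    _ ≤ ∑ k ∈ s.image g, (a * r) ^ k := sum_le_sum fun k _ => by
        rw [mul_pow]; exact mul_le_mul_of_nonneg_right (hcard k) (by positivity)
    _ ≤ ∑' k, (a * r) ^ k := Summable.sum_le_tsum _ (fun _ _ => by positivity)
        (summable_geometric_of_lt_one (by positivity) har1)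
    _ = (1 - a * r)⁻¹ := tsum_geometric_of_lt_one (by positivity) har1
    _ ≤ 2 := by rw [inv_le_comm₀ (by linarith) (by norm_num)]; linarith

namespace SimpleGraph

variable {V : Type*} {G : SimpleGraph V}

theorem card_finsetWalkLength_le [DecidableEq V] [G.LocallyFinite] {Δ : ℕ}
    (hΔ : ∀ x, G.degree x ≤ Δ) (n : ℕ) (u w : V) :
    #(G.finsetWalkLength n u w) ≤ Δ ^ n := by
  induction n generalizing u with
  | zero => rcases eq_or_ne u w with rfl | h <;> simp [finsetWalkLength, *]
  | succ n ih =>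
    calc #(G.finsetWalkLength (n + 1) u w)
        ≤ ∑ x : G.neighborSet u, #(G.finsetWalkLength n x w) := by
          rw [finsetWalkLength]
          exact card_biUnion_le.trans (sum_le_sum fun x _ => (card_map _).le)
      _ ≤ ∑ _x : G.neighborSet u, Δ ^ n := sum_le_sum fun x _ => ih x
      _ = G.degree u * Δ ^ n := by
          rw [sum_const, card_univ, card_neighborSet_eq_degree, smul_eq_mul]
      _ ≤ Δ ^ (n + 1) := by rw [pow_succ']; exact Nat.mul_le_mul_right _ (hΔ u)

theorem Walk.exists_detour {v s u : V} (w : G.Walk v v) (hs : s ∈ w.support) (h : G.Adj s u) :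
    ∃ w' : G.Walk v v, w'.length = w.length + 2 ∧
      {x | x ∈ w'.support} = insert u {x | x ∈ w.support} := by
  obtain ⟨p, q, rfl⟩ := Walk.mem_support_iff_exists_append.mp hs
  refine ⟨p.append (Walk.cons h (Walk.cons h.symm q)), by simp; omega, ?_⟩
  ext x
  have := p.end_mem_support
  simp only [Set.mem_ofPred_eq, Set.mem_insert_iff, Walk.mem_support_append_iff,
    Walk.support_cons, List.mem_cons]
  grind

theorem Connected.exists_adj_boundary {U S : Set V} (hconn : (G.induce U).Connected) {x y : V}
    (hx : x ∈ U) (hy : y ∈ U) (hxS : x ∈ S) (hyS : y ∉ S) :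
    ∃ s ∈ S, ∃ u ∈ U \ S, G.Adj s u := by
  obtain ⟨p⟩ := hconn.preconnected ⟨x, hx⟩ ⟨y, hy⟩
  obtain ⟨d, -, hd1, hd2⟩ := p.exists_boundary_dart {z : U | (z : V) ∈ S} hxS hyS
  exact ⟨d.fst, hd1, d.snd, ⟨d.snd.2, hd2⟩, d.adj⟩

/-- A closed walk through all of `U` is grown from the trivial walk at `v` by repeatedly adding a
back-and-forth excursion along an edge leaving the vertices visited so far. -/
theorem Connected.exists_walk_support_eq {U : Set V} (hU : U.Finite)
    (hconn : (G.induce U).Connected) {v : V} (hv : v ∈ U) :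
    ∃ w : G.Walk v v, w.length = 2 * (U.ncard - 1) ∧ {x | x ∈ w.support} = U := by
  have grow : ∀ k, k + 1 ≤ U.ncard → ∃ S ⊆ U, S.ncard = k + 1 ∧
      ∃ w : G.Walk v v, w.length = 2 * k ∧ {x | x ∈ w.support} = S := by
    intro k
    induction k with
    | zero => exact fun _ => ⟨{v}, by simpa, by simp, Walk.nil, rfl, by ext; simp⟩
    | succ k ih =>
      intro hk
      obtain ⟨S, hSU, hcard, w, hlen, hsupp⟩ := ih (by omega)
      obtain ⟨y, hyU, hyS⟩ : ∃ y ∈ U, y ∉ S := Set.not_subset.mp fun hUS =>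
        by have := Set.ncard_le_ncard hUS (hU.subset hSU); omega
      have hvS : v ∈ S := (Set.ext_iff.mp hsupp v).mp w.start_mem_support
      obtain ⟨s, hs, u, ⟨huU, huS⟩, hadj⟩ := hconn.exists_adj_boundary hv hyU hvS hyS
      obtain ⟨w', hlen', hsupp'⟩ := w.exists_detour ((Set.ext_iff.mp hsupp s).mpr hs) hadj
      refine ⟨insert u S, Set.insert_subset huU hSU, ?_, w', by omega, hsupp' ▸ hsupp ▸ rfl⟩
      rw [Set.ncard_insert_of_notMem huS (hU.subset hSU), hcard]
  have hpos : 0 < U.ncard := (Set.ncard_pos hU).mpr ⟨v, hv⟩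
  obtain ⟨S, hSU, hcard, w, hlen, hsupp⟩ := grow (U.ncard - 1) (by omega)
  exact ⟨w, hlen, hsupp.trans (Set.eq_of_subset_of_ncard_le hSU (by omega) hU)⟩

theorem card_le_of_connected_of_ncard_eq [Finite V] [DecidableEq V] [G.LocallyFinite] {Δ : ℕ}
    (hΔ : ∀ x, G.degree x ≤ Δ) {v : V} {k : ℕ} (s : Finset (Set V))
    (hs : ∀ U ∈ s, v ∈ U ∧ (G.induce U).Connected ∧ U.ncard = k + 1) :
    #s ≤ Δ ^ (2 * k) := by
  have hcover : ∀ U ∈ s, ∃ w : G.Walk v v, w.length = 2 * k ∧ {x | x ∈ w.support} = U := by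
    intro U hU
    obtain ⟨hv, hconn, hcard⟩ := hs U hU
    simpa [hcard] using hconn.exists_walk_support_eq (Set.toFinite U) hv
  choose! walk hlen hsupp using hcover
  calc #s ≤ #(G.finsetWalkLength (2 * k) v v) :=
        card_le_card_of_injOn walk (fun U hU => G.mem_finsetWalkLength_iff.mpr (hlen U hU))
          fun U hU U' hU' h => (hsupp U hU).symm.trans (h ▸ hsupp U' hU')
    _ ≤ Δ ^ (2 * k) := card_finsetWalkLength_le hΔ _ _ _

theorem sum_pow_ncard_connected_le [Finite V] [G.LocallyFinite] {Δ : ℕ}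
    (hΔ : ∀ x, G.degree x ≤ Δ) {r : ℝ} (hr : 0 ≤ r) (hΔr : (Δ : ℝ) ^ 2 * r ≤ 1 / 2) (v : V) :
    ∑ᶠ U ∈ {U : Set V | U.Nonempty ∧ v ∈ U ∧ (G.induce U).Connected}, r ^ U.ncard ≤ 2 * r := by
  set F := (Set.toFinite {U : Set V | U.Nonempty ∧ v ∈ U ∧ (G.induce U).Connected}).toFinset
  have hmem : ∀ U ∈ F, U.Nonempty ∧ v ∈ U ∧ (G.induce U).Connected := by simp [F]
  have hfibre (k : ℕ) : #{U ∈ F | U.ncard - 1 = k} ≤ (Δ ^ 2) ^ k := by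
    rw [← pow_mul]
    refine card_le_of_connected_of_ncard_eq (v := v) hΔ _ fun U hU => ?_
    obtain ⟨hU, hk⟩ := mem_filter.mp hU
    obtain ⟨hne, hv, hconn⟩ := hmem U hU
    exact ⟨hv, hconn, by have := (Set.ncard_pos (Set.toFinite U)).mpr hne; omega⟩
  calc ∑ᶠ U ∈ {U : Set V | U.Nonempty ∧ v ∈ U ∧ (G.induce U).Connected}, r ^ U.ncard
      = r * ∑ U ∈ F, r ^ (U.ncard - 1) := by
        rw [finsum_mem_eq_finite_toFinset_sum _ (Set.toFinite _), mul_sum]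
        refine sum_congr rfl fun U hU => ?_
        rw [← pow_succ', Nat.sub_add_cancel ((Set.ncard_pos (Set.toFinite U)).mpr (hmem U hU).1)]
    _ ≤ r * 2 := mul_le_mul_of_nonneg_left
        (F.sum_pow_le_two _ (by positivity) hr hΔr fun k => by exact_mod_cast hfibre k) hr
    _ = 2 * r := mul_comm _ _

end SimpleGraph

theorem Real.exp_two_sub_add_log_le {q Δ t : ℝ} (hq : 1 < q) (hΔ : 0 < Δ)
    (ht : 4 + 2 * Real.log (q * Δ) ≤ t) :
    Real.exp (2 - t + Real.log (q - 1)) ≤ 1 / (4 * Δ ^ 2) := by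
  have hqΔ : 0 < q * Δ := by positivity
  calc Real.exp (2 - t + Real.log (q - 1))
      ≤ Real.exp (Real.log (q - 1) - (Real.log (q * Δ) + Real.log (q * Δ))) :=
        Real.exp_le_exp.mpr (by linarith)
    _ = (q - 1) / (q * Δ) ^ 2 := by
        rw [Real.exp_sub, Real.exp_add, Real.exp_log hqΔ, Real.exp_log (by linarith), sq]
    _ ≤ 1 / (4 * Δ ^ 2) := by
        rw [div_le_div_iff₀ (by positivity) (by positivity)]
        nlinarith [mul_nonneg (sq_nonneg Δ) (sq_nonneg (q - 2))]

namespace Paper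

variable {V : Type*}

/-- the Kotecký–Preiss type geometric sum bound. -/
theorem statement10 [Fintype V] (G : SimpleGraph V) (Δ : ℕ) (hΔ1 : 1 ≤ Δ)
    (hΔ : ∀ v : V, deg G v ≤ Δ) (q : ℕ) (hq : 2 ≤ q) (α : ℝ) (hα : 0 < α)
    (β : ℝ) (hβ : (4 + 2 * Real.log ((q : ℝ) * (Δ : ℝ))) / α ≤ β) (v : V) :
    (∑ᶠ U ∈ {U : Set V | U.Nonempty ∧ v ∈ U ∧ (G.induce U).Connected},
        Real.exp ((2 - β * α + Real.log ((q : ℝ) - 1)) * (U.ncard : ℝ))) ≤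
      1 / ((Δ : ℝ) + 1) := by
  set r := Real.exp (2 - β * α + Real.log ((q : ℝ) - 1))
  have hΔR : (1 : ℝ) ≤ Δ := by exact_mod_cast hΔ1
  have hr : r ≤ 1 / (4 * (Δ : ℝ) ^ 2) :=
    Real.exp_two_sub_add_log_le (by exact_mod_cast hq) (by positivity)
      (by rwa [div_le_iff₀ hα] at hβ)
  have hΔr : (Δ : ℝ) ^ 2 * r ≤ 1 / 2 := by
    calc (Δ : ℝ) ^ 2 * r ≤ (Δ : ℝ) ^ 2 * (1 / (4 * (Δ : ℝ) ^ 2)) := by gcongr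
      _ ≤ 1 / 2 := by field_simp; norm_num
  simp_rw [mul_comm _ (Set.ncard _ : ℝ), Real.exp_nat_mul]
  calc _ ≤ 2 * r := G.sum_pow_ncard_connected_le (fun x => deg_eq_degree G x ▸ hΔ x)
        (Real.exp_nonneg _) hΔr v
    _ ≤ 2 * (1 / (4 * (Δ : ℝ) ^ 2)) := by gcongr
    _ ≤ 1 / ((Δ : ℝ) + 1) := by
      rw [mul_one_div, div_le_div_iff₀ (by positivity) (by positivity)]
      nlinarith

end Paper

end
end

section
/- Let G=(V,E) be a finite simple graph and let S ⊆ B ⊆ V with vol_G(S) > 0 and vol_G(S) ≤ vol_G(B)/2. Let 0 ≤ ε ≤ 1 and suppose min{φ(S,B), φ(B∖S, B)} ≥ ε/3. Then φ_{G[B]}(S) ≥ e(S,B)/vol_G(S) ≥ (ε/7)·max{φ_G(S), φ_G(B∖S)}. -/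
open Classical

noncomputable section

namespace Paper

variable {V : Type*}

/-!
Write a = e(S,B), b = e(S,V∖B), c = e(B∖S,V∖B), s = vol(S), t = vol(B∖S). Then
|∂S| = a + b, |∂(B∖S)| = a + c and vol(B) = s + t, and the two hypotheses on φ(·,B) read
ε b t ≤ 3a(s + t) and ε c s ≤ 3a(s + t). Since s ≤ t these give ε b ≤ 6a and ε c s ≤ 6a t, so
with ε ≤ 1 we get ε(a + b) ≤ 7a and ε s(a + c) ≤ 7a t. In G[B] the boundary of S consists of exactly
the a edges from S to B∖S, while degrees can only drop.
-/

lemma pos_and_mul_le_of_le_div {ε x y : ℝ} (hε : 0 < ε) (hy : 0 ≤ y) (h : ε ≤ x / y) :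
    0 < y ∧ ε * y ≤ x := by
  have hy₀ : 0 < y := hy.lt_of_ne fun hy₀ => by rw [← hy₀, div_zero] at h; linarith
  exact ⟨hy₀, (le_div_iff₀ hy₀).1 h⟩

lemma mul_max_div_le_of_le_div {a b c s t ε : ℝ} (ha : 0 ≤ a) (hb : 0 ≤ b) (hc : 0 ≤ c)
    (hs : 0 ≤ s) (hst : s ≤ t) (hε₁ : ε ≤ 1)
    (hb' : ε / 3 ≤ a / (t / (s + t) * b)) (hc' : ε / 3 ≤ a / (s / (s + t) * c)) :
    ε / 7 * max ((a + b) / s) ((a + c) / t) ≤ a / s := by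
  rcases le_or_gt ε 0 with hε | hε
  · have hmax : 0 ≤ max ((a + b) / s) ((a + c) / t) := le_max_of_le_left (by positivity)
    exact (mul_nonpos_of_nonpos_of_nonneg (by linarith) hmax).trans (by positivity)
  have ht : 0 ≤ t := hs.trans hst
  -- since x / 0 = 0, the hypotheses force both denominators to be positive once ε > 0
  obtain ⟨-, hb''⟩ := pos_and_mul_le_of_le_div (by positivity) (by positivity) hb'
  obtain ⟨hsc, hc''⟩ := pos_and_mul_le_of_le_div (by positivity) (by positivity) hc'
  have hs₀ : 0 < s := hs.lt_of_ne (by rintro rfl; simp at hsc)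
  have ht₀ : 0 < t := hs₀.trans_le hst
  have hεb : ε * b * t ≤ 3 * a * (s + t) := by
    field_simp at hb''
    linarith
  have hεc : ε * c * s ≤ 3 * a * (s + t) := by
    field_simp at hc''
    linarith
  have hεa : ε * a ≤ a := mul_le_of_le_one_left ha hε₁
  rw [mul_max_of_nonneg _ _ (by positivity), max_le_iff, mul_div_assoc', mul_div_assoc',
    div_le_div_iff₀ (by positivity) hs₀, div_le_div_iff₀ (by positivity) hs₀]
  constructor
  · have hεb₆ : ε * b ≤ 6 * a := le_of_mul_le_mul_right (by nlinarith) ht₀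
    nlinarith
  · nlinarith [mul_le_mul_of_nonneg_left hst ha, mul_le_mul_of_nonneg_left hεa hs]

def crossEdges (G : SimpleGraph V) (S T : Set V) : Set (Sym2 V) :=
  {e | e ∈ G.edgeSet ∧ ∃ u v, e = s(u, v) ∧ u ∈ S ∧ v ∈ T \ S}

section Edges

variable (G : SimpleGraph V) {S T T' B : Set V}

lemma ncard_crossEdges : (crossEdges G S T).ncard = eCount G S T := rfl

@[simp]
lemma mk_mem_crossEdges {x y : V} :
    s(x, y) ∈ crossEdges G S T ↔
      G.Adj x y ∧ (x ∈ S ∧ y ∈ T \ S ∨ y ∈ S ∧ x ∈ T \ S) := by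
  simp only [crossEdges, Set.mem_ofPred_eq, SimpleGraph.mem_edgeSet, Sym2.eq_iff]
  constructor
  · rintro ⟨hxy, u, v, (⟨rfl, rfl⟩ | ⟨rfl, rfl⟩), hu, hv⟩
    exacts [⟨hxy, .inl ⟨hu, hv⟩⟩, ⟨hxy, .inr ⟨hu, hv⟩⟩]
  · rintro ⟨hxy, ⟨hx, hy⟩ | ⟨hy, hx⟩⟩
    exacts [⟨hxy, x, y, .inl ⟨rfl, rfl⟩, hx, hy⟩, ⟨hxy, y, x, .inr ⟨rfl, rfl⟩, hy, hx⟩]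

@[simp]
lemma mk_mem_bdry {x y : V} :
    s(x, y) ∈ bdry G S ↔ G.Adj x y ∧ (x ∈ S ∧ y ∉ S ∨ y ∈ S ∧ x ∉ S) := by
  simp only [bdry, Set.mem_ofPred_eq, SimpleGraph.mem_edgeSet, Sym2.mem_iff]
  constructor
  · rintro ⟨hxy, ⟨u, hu, huS⟩, v, hv, hvS⟩
    rcases hu with rfl | rfl <;> rcases hv with rfl | rfl <;> tauto
  · rintro ⟨hxy, ⟨hx, hy⟩ | ⟨hy, hx⟩⟩
    exacts [⟨hxy, ⟨x, .inl rfl, hx⟩, y, .inr rfl, hy⟩, ⟨hxy, ⟨y, .inr rfl, hy⟩, x, .inl rfl, hx⟩]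

lemma bdry_eq_crossEdges_univ : bdry G S = crossEdges G S Set.univ := by
  ext e
  induction e using Sym2.ind
  simp

lemma crossEdges_union : crossEdges G S (T ∪ T') = crossEdges G S T ∪ crossEdges G S T' := by
  ext e
  induction e using Sym2.ind
  simp only [mk_mem_crossEdges, Set.mem_union, Set.mem_sdiff]
  tauto

lemma disjoint_crossEdges (h : Disjoint T T') :
    Disjoint (crossEdges G S T) (crossEdges G S T') := by
  rw [Set.disjoint_left]
  intro e
  induction e using Sym2.ind
  simp only [mk_mem_crossEdges, Set.mem_sdiff]
  have := Set.disjoint_left.1 h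
  tauto

lemma crossEdges_sdiff_self (hSB : S ⊆ B) : crossEdges G (B \ S) B = crossEdges G S B := by
  ext e
  induction e using Sym2.ind
  simp only [mk_mem_crossEdges, Set.sdiff_sdiff_cancel_left hSB, Set.mem_sdiff]
  tauto

lemma bdry_restrict (hSB : S ⊆ B) : bdry (restrict G B) S = crossEdges G S B := by
  ext e
  induction e using Sym2.ind
  simp only [mk_mem_bdry, mk_mem_crossEdges, restrict, Set.mem_sdiff]
  tauto

lemma ncard_bdry [Finite V] :
    (bdry G S).ncard = eCount G S B + eCount G S (Set.univ \ B) := by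
  have h := Set.ncard_union_eq
    (disjoint_crossEdges G (S := S) (Set.disjoint_sdiff_right (s := B) (t := Set.univ)))
  rwa [← crossEdges_union, Set.union_sdiff_cancel (Set.subset_univ B), ← bdry_eq_crossEdges_univ]
    at h

lemma eCount_sdiff_self (hSB : S ⊆ B) : eCount G (B \ S) B = eCount G S B :=
  congrArg Set.ncard (crossEdges_sdiff_self G hSB)

end Edges

section Volume

variable [Finite V] (G : SimpleGraph V)

lemma vol_eq_add_vol_sdiff {S B : Set V} (hSB : S ⊆ B) : vol G B = vol G S + vol G (B \ S) := by
  rw [vol, vol, vol, ← finsum_mem_union Set.disjoint_sdiff_right (Set.toFinite _)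
    (Set.toFinite _), Set.union_sdiff_cancel hSB]

lemma vol_restrict_le (B S : Set V) : vol (restrict G B) S ≤ vol G S := by
  rw [vol, vol, finsum_mem_eq_finite_toFinset_sum _ (Set.toFinite S),
    finsum_mem_eq_finite_toFinset_sum _ (Set.toFinite S)]
  exact Finset.sum_le_sum fun v _ => Set.ncard_le_ncard fun w hw => hw.1

lemma vol_pos_of_bdry_nonempty {S : Set V} (h : (bdry G S).Nonempty) : 0 < vol G S := by
  obtain ⟨e, he⟩ := h
  induction e using Sym2.ind with | _ x y => ?_
  wlog hx : x ∈ S generalizing x y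
  · rw [Sym2.eq_swap] at he
    exact this y x he (by simp_all)
  have hdeg : 0 < deg G x := (Set.ncard_pos).2 ⟨y, ((mk_mem_bdry G).1 he).1⟩
  rw [vol, finsum_mem_eq_finite_toFinset_sum _ (Set.toFinite S)]
  exact hdeg.trans_le (Finset.single_le_sum (fun _ _ => Nat.zero_le _) (by simpa))

lemma eCount_div_vol_le_cond_restrict {S B : Set V} (hSB : S ⊆ B) :
    (eCount G S B : ℝ) / vol G S ≤ cond (restrict G B) S := by
  rw [cond, bdry_restrict G hSB, ncard_crossEdges]
  rcases Nat.eq_zero_or_pos (eCount G S B) with h | h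
  · simp [h]
  have hvol : 0 < vol (restrict G B) S := by
    refine vol_pos_of_bdry_nonempty _ ?_
    rwa [bdry_restrict G hSB, ← Set.ncard_pos, ncard_crossEdges]
  exact div_le_div_of_nonneg_left (by positivity) (by exact_mod_cast hvol)
    (by exact_mod_cast vol_restrict_le G B S)

end Volume

theorem statement17_general [Fintype V] (G : SimpleGraph V) (S B : Set V) (hSB : S ⊆ B)
    (hhalf : (vol G S : ℝ) ≤ (vol G B : ℝ) / 2)
    (ε : ℝ) (hε1 : ε ≤ 1)
    (h : ε / 3 ≤ min (condPair G S B) (condPair G (B \ S) B)) :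
    ε / 7 * max (cond G S) (cond G (B \ S)) ≤ (eCount G S B : ℝ) / (vol G S : ℝ) ∧
      (eCount G S B : ℝ) / (vol G S : ℝ) ≤ cond (restrict G B) S := by
  refine ⟨?_, eCount_div_vol_le_cond_restrict G hSB⟩
  have hvolB : (vol G B : ℝ) = vol G S + vol G (B \ S) := by
    exact_mod_cast vol_eq_add_vol_sdiff G hSB
  rw [le_min_iff, condPair, condPair, Set.sdiff_sdiff_cancel_left hSB, eCount_sdiff_self G hSB,
    hvolB] at h
  rw [cond, cond, ncard_bdry G (B := B), ncard_bdry G (S := B \ S) (B := B),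
    eCount_sdiff_self G hSB]
  push_cast
  exact mul_max_div_le_of_le_div (by positivity) (by positivity) (by positivity) (by positivity)
    (by linarith) hε1 h.1 h.2

/-- Lemma 2.3 of Oveis Gharan–Trevisan. -/
theorem statement17 [Fintype V] (G : SimpleGraph V) (S B : Set V) (hSB : S ⊆ B)
    (hvolS : 0 < vol G S) (hhalf : (vol G S : ℝ) ≤ (vol G B : ℝ) / 2)
    (ε : ℝ) (hε0 : 0 ≤ ε) (hε1 : ε ≤ 1)
    (h : ε / 3 ≤ min (condPair G S B) (condPair G (B \ S) B)) :
    ε / 7 * max (cond G S) (cond G (B \ S)) ≤ (eCount G S B : ℝ) / (vol G S : ℝ) ∧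
      (eCount G S B : ℝ) / (vol G S : ℝ) ≤ cond (restrict G B) S :=
  statement17_general G S B hSB hhalf ε hε1 h

end Paper

end
end
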